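/- There is an injective monoid morphism from the direct product {a,b}* × {c,d}* of two free monoids of rank 2 into the monoid of queue actions Q over a two-letter alphabet A = {a,b}, sending (a,ε) ↦ [a], (b,ε) ↦ [ab], (ε,c) ↦ [b̄], (ε,d) ↦ [ā b̄ b̄]. -/

import Mathlib

/-- A basic queue action: write a letter or read a letter. -/
inductive Act (A : Type) : Type
  | wr (a : A)
  | rd (a : A)
deriving DecidableEq

variable {A : Type} [DecidableEq A]

/-- The action of words over `Act A` on queue states `A* ∪ {⊥}` (⊥ = `none`). -/
def act : Option (List A) → List (Act A) → Option (List A)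
  | q, [] => q
  | none, _ :: _ => none
  | some q, (Act.wr a) :: u => act (some (q ++ [a])) u
  | some q, (Act.rd a) :: u =>
    match q with
    | [] => none
    | b :: q' => if b = a then act (some q') u else none

/-- Two words over `Act A` are equivalent if they act identically on all queues. -/
def qequiv (u v : List (Act A)) : Prop := ∀ q : List A, act (some q) u = act (some q) v

/-- Writing the word `w`. -/
def W (w : List A) : List (Act A) := w.map Act.wr

/-- Reading the word `w` (the barred copy of `w`). -/
def R (w : List A) : List (Act A) := w.map Act.rd

/-- `shuffle s` is the word `s₁ s̄₁ s₂ s̄₂ … sₖ s̄ₖ`. -/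
def shuffle (s : List A) : List (Act A) := s.flatMap fun a => [Act.wr a, Act.rd a]

/-- The projection to write letters. -/
def prW (w : List (Act A)) : List A :=
  w.filterMap fun x => match x with | Act.wr a => some a | Act.rd _ => none

/-- The projection to read letters (with the bars removed). -/
def prR (w : List (Act A)) : List A :=
  w.filterMap fun x => match x with | Act.wr _ => none | Act.rd a => some a

theorem act_append (u v : List (Act A)) : ∀ q, act q (u ++ v) = act (act q u) v := by
  induction u with
  | nil =>
      intro q
      cases q <;> rfl
  | cons x u ih =>
      intro q
      cases q with
      | none =>
          simp only [List.cons_append, act]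
          cases v with
          | nil => rfl
          | cons _ _ => rfl
      | some q =>
          cases x with
          | wr a => simpa [act] using ih _
          | rd a =>
              cases q with
              | nil =>
                  simp only [List.cons_append, act]
                  cases v with
                  | nil => rfl
                  | cons _ _ => rfl
              | cons b q' =>
                  by_cases h : b = a
                  · simp [List.cons_append, act, h, ih]
                  · simp only [List.cons_append, act, if_neg h]
                    cases v with
                    | nil => rfl
                    | cons _ _ => rfl

/-- The setoid of queue-action equivalence. -/
def qsetoid (A : Type) [DecidableEq A] : Setoid (List (Act A)) :=
  ⟨qequiv, ⟨fun _ _ => rfl, fun h q => (h q).symm, fun h1 h2 q => (h1 q).trans (h2 q)⟩⟩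

/-- The monoid of queue actions. -/
def QAct (A : Type) [DecidableEq A] : Type := Quotient (qsetoid A)

theorem act_none : ∀ v : List (Act A), act (none : Option (List A)) v = none
  | [] => rfl
  | _ :: _ => rfl

theorem qequiv_append {u u' v v' : List (Act A)} (hu : qequiv u u') (hv : qequiv v v') :
    qequiv (u ++ v) (u' ++ v') := by
  intro q
  rw [act_append, act_append, hu q]
  cases h : act (some q) u' with
  | none => rw [act_none, act_none]
  | some q' => exact hv q'

instance : Monoid (QAct A) where
  mul := Quotient.map₂ (· ++ ·) (fun _ _ hu _ _ hv => qequiv_append hu hv)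
  one := Quotient.mk (qsetoid A) []
  mul_assoc := by
    rintro ⟨u⟩ ⟨v⟩ ⟨w⟩
    exact congrArg (Quotient.mk (qsetoid A)) (List.append_assoc u v w)
  one_mul := by
    rintro ⟨u⟩
    rfl
  mul_one := by
    rintro ⟨u⟩
    exact congrArg (Quotient.mk (qsetoid A)) (List.append_nil u)

/-- The class of a word in the monoid of queue actions. -/
def cls (w : List (Act A)) : QAct A := Quotient.mk (qsetoid A) w

theorem cls_mul (u v : List (Act A)) : cls u * cls v = cls (u ++ v) := rfl

/-!
A word `p` of writes followed by a word `q̄` of reads sends the queue `s` to `(s p) q⁻¹` when `q`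
is a prefix of `s p`, and to `⊥` otherwise. Hence `[p q̄]` determines `(p, q)`: run it on the
queue `q`, and on `q' x` for a proper prefix `q'` of `q` and a letter `x` other than the next
letter of `q`. The same formula shows that `p` commutes with `q̄` as soon as no nonempty suffix
of `q` is a prefix of `p`, which is the case for `p ∈ {a, ab}` and `q ∈ {b, abb}`. So, with the
substitutions `σ : a ↦ a, b ↦ ab` and `τ : c ↦ b, d ↦ abb`, the map `(u, v) ↦ [σ(u) τ̄(v)]` is a
morphism, injective because `{a, ab}` is a suffix code and `{b, abb}` a prefix code.
-/

section

variable {α β : Type*}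

theorem List.flatMap_injective_of_prefix {c : α → List β} (hne : ∀ x, c x ≠ [])
    (hpre : ∀ x y, c x <+: c y → x = y) : Function.Injective fun u : List α => u.flatMap c := by
  intro u
  induction u with
  | nil =>
    rintro (_ | ⟨y, v⟩) h
    · rfl
    · simp [hne y] at h
  | cons x u ih =>
    rintro (_ | ⟨y, v⟩) h
    · simp [hne x] at h
    · simp only [List.flatMap_cons] at h
      have hx : c x <+: c y ++ v.flatMap c := h ▸ List.prefix_append _ _
      have hy : c y <+: c y ++ v.flatMap c := List.prefix_append _ _
      have hxy : x = y := by
        rcases List.prefix_or_prefix_of_prefix hx hy with hl | hl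
        · exact hpre x y hl
        · exact (hpre y x hl).symm
      subst hxy
      rw [ih (List.append_cancel_left h)]

theorem List.flatMap_injective_of_suffix {c : α → List β} (hne : ∀ x, c x ≠ [])
    (hsuf : ∀ x y, c x <:+ c y → x = y) : Function.Injective fun u : List α => u.flatMap c := by
  have hrev := List.flatMap_injective_of_prefix (c := List.reverse ∘ c)
    (by simpa using hne) (fun x y h => hsuf x y (List.reverse_prefix.mp h))
  intro u v h
  apply List.reverse_injective
  apply hrev
  simp only [← List.reverse_flatMap]
  exact congrArg List.reverse h

def FreeMonoid.subst (c : α → List β) : FreeMonoid α →* FreeMonoid β :=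
  FreeMonoid.lift fun x => FreeMonoid.ofList (c x)

theorem FreeMonoid.toList_subst (c : α → List β) (u : FreeMonoid α) :
    (FreeMonoid.subst c u).toList = u.toList.flatMap c := by
  simp [FreeMonoid.subst, FreeMonoid.lift_apply, FreeMonoid.toList_prod, List.flatMap_def,
    Function.comp_def]

theorem FreeMonoid.subst_injective {c : α → List β}
    (hc : Function.Injective fun u : List α => u.flatMap c) :
    Function.Injective (FreeMonoid.subst c) := fun u v h =>
  FreeMonoid.toList.injective <| hc <| by
    simpa only [FreeMonoid.toList_subst] using congrArg FreeMonoid.toList h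

theorem FreeMonoid.commute_of_commute_of {M : Type*} [Monoid M] {f : FreeMonoid α →* M}
    {g : FreeMonoid β →* M} (h : ∀ x y, Commute (f (.of x)) (g (.of y))) (u : FreeMonoid α)
    (v : FreeMonoid β) : Commute (f u) (g v) := by
  have hof : ∀ x, Commute (f (.of x)) (g v) := fun x => by
    induction v using FreeMonoid.inductionOn' with
    | one => simp
    | of_mul y v ihv => exact map_mul g _ _ ▸ (h x y).mul_right ihv
  induction u using FreeMonoid.inductionOn' with
  | one => simp
  | of_mul x u ihu => exact map_mul f _ _ ▸ (hof x).mul_left ihu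

end

theorem act_W (s p : List A) : act (some s) (W p) = some (s ++ p) := by
  induction p generalizing s with
  | nil => simp [W, act]
  | cons a p ih => simpa [W, act] using ih (s ++ [a])

theorem act_R (s q : List A) :
    act (some s) (R q) = if q <+: s then some (s.drop q.length) else none := by
  induction q generalizing s with
  | nil => simp [R, act]
  | cons a q ih =>
    rcases s with _ | ⟨b, s⟩
    · simp [R, act]
    · by_cases hb : b = a
      · subst hb
        simpa [R, act] using ih s
      · simp [R, act, hb, Ne.symm hb]

theorem act_W_append_R (s p q : List A) :
    act (some s) (W p ++ R q) =
      if q <+: s ++ p then some ((s ++ p).drop q.length) else none := by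
  rw [act_append, act_W, act_R]

theorem act_R_append_W (s p q : List A) :
    act (some s) (R q ++ W p) = if q <+: s then some (s.drop q.length ++ p) else none := by
  rw [act_append, act_R]
  split_ifs
  · rw [act_W]
  · rw [act_none]

-- Suffixes are enumerated as `q.tails` so that the hypothesis is decidable for concrete words.
theorem qequiv_W_append_R_comm {p q : List A} (h : ∀ t ∈ q.tails, t ≠ [] → ¬ t <+: p) :
    qequiv (W p ++ R q) (R q ++ W p) := by
  intro s
  rw [act_W_append_R, act_R_append_W]
  by_cases hq : q <+: s
  · rw [if_pos (hq.trans (s.prefix_append p)), if_pos hq,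
      List.drop_append_of_le_length hq.length_le]
  · rw [if_neg hq, if_neg]
    intro hsp
    obtain ⟨t, rfl⟩ := (List.prefix_or_prefix_of_prefix hsp (s.prefix_append p)).resolve_left hq
    refine h t ((List.mem_tails _ _).mpr (List.suffix_append s t)) ?_
      ((List.prefix_append_right_inj s).mp hsp)
    rintro rfl
    exact hq (by simp)

theorem commute_cls_W_cls_R {p q : List A} (h : ∀ t ∈ q.tails, t ≠ [] → ¬ t <+: p) :
    Commute (cls (W p)) (cls (R q)) :=
  Quotient.sound (qequiv_W_append_R_comm h)

theorem eq_of_qequiv_W_append_R_of_length_le [Nontrivial A] {p q p' q' : List A}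
    (h : qequiv (W p ++ R q) (W p' ++ R q')) (hle : q'.length ≤ q.length) : p = p' ∧ q = q' := by
  have hq := h q
  rw [act_W_append_R, act_W_append_R, if_pos (q.prefix_append p)] at hq
  split_ifs at hq with hq'
  obtain ⟨r, rfl⟩ := List.prefix_of_prefix_length_le hq' (q.prefix_append p') hle
  rw [List.drop_left, List.append_assoc, List.drop_left, Option.some.injEq] at hq
  subst hq
  rcases r with _ | ⟨x, r⟩
  · simp
  · obtain ⟨y, hy⟩ := exists_ne x
    have hy' := h (q' ++ [y])
    rw [act_W_append_R, act_W_append_R, if_neg, if_pos ((q'.prefix_append [y]).trans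
      (List.prefix_append _ _))] at hy'
    · exact absurd hy' (by simp)
    · simp [hy.symm]

def writeHom : FreeMonoid A →* QAct A where
  toFun w := cls (W w.toList)
  map_one' := rfl
  map_mul' _ _ := congrArg cls (List.map_append ..)

def readHom : FreeMonoid A →* QAct A where
  toFun w := cls (R w.toList)
  map_one' := rfl
  map_mul' _ _ := congrArg cls (List.map_append ..)

theorem writeHom_mul_readHom_injective [Nontrivial A] :
    Function.Injective fun w : FreeMonoid A × FreeMonoid A => writeHom w.1 * readHom w.2 := by
  rintro ⟨p, q⟩ ⟨p', q'⟩ h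
  have h' : qequiv (W p.toList ++ R q.toList) (W p'.toList ++ R q'.toList) := Quotient.exact h
  obtain ⟨hp, hq⟩ : p.toList = p'.toList ∧ q.toList = q'.toList := by
    rcases le_total q'.toList.length q.toList.length with hle | hle
    · exact eq_of_qequiv_W_append_R_of_length_le h' hle
    · exact (eq_of_qequiv_W_append_R_of_length_le (fun s => (h' s).symm) hle).imp Eq.symm Eq.symm
  exact Prod.ext (FreeMonoid.toList.injective hp) (FreeMonoid.toList.injective hq)

def leftCode : Bool → List Bool
  | false => [false]
  | true => [false, true]

def rightCode : Bool → List Bool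
  | false => [true]
  | true => [false, true, true]

-- The letters `a`, `c` are `false` and `b`, `d` are `true`.
/-- With `A = {a, b}` (here `a = false`, `b = true`), the direct product of two free
monoids of rank 2 embeds into the monoid of queue actions, via
`(a,ε) ↦ [a]`, `(b,ε) ↦ [ab]`, `(ε,c) ↦ [b̄]`, `(ε,d) ↦ [ā b̄ b̄]`. -/
theorem stmt17 :
    ∃ f : FreeMonoid Bool × FreeMonoid Bool →* QAct Bool,
      Function.Injective f ∧
      f (FreeMonoid.of false, 1) = cls [Act.wr false] ∧
      f (FreeMonoid.of true, 1) = cls (W [false, true]) ∧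
      f (1, FreeMonoid.of false) = cls [Act.rd true] ∧
      f (1, FreeMonoid.of true) = cls (R [false, true, true]) := by
  have hσ : Function.Injective (FreeMonoid.subst leftCode) :=
    FreeMonoid.subst_injective (List.flatMap_injective_of_suffix (by decide) (by decide))
  have hτ : Function.Injective (FreeMonoid.subst rightCode) :=
    FreeMonoid.subst_injective (List.flatMap_injective_of_prefix (by decide) (by decide))
  have hcomm : ∀ x y, Commute (writeHom.comp (FreeMonoid.subst leftCode) (.of x))
      (readHom.comp (FreeMonoid.subst rightCode) (.of y)) := fun x y =>
    commute_cls_W_cls_R (p := leftCode x) (q := rightCode y) (by cases x <;> cases y <;> decide)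
  refine ⟨MonoidHom.noncommCoprod _ _ (FreeMonoid.commute_of_commute_of hcomm),
    writeHom_mul_readHom_injective.comp (hσ.prodMap hτ), rfl, rfl, rfl, rfl⟩
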